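/- arXiv:1105.2252 — 8 statements merged into one kernel-verified Lean document; each statement's English description precedes it below -/
import Mathlib

section
/- If three points $(u,v)$, $(u_1,v_1)$, $(u_2,v_2)$ in the open first quadrant of $\mathbb{R}^2$ all satisfy $xy \le A$ (where $A \ge 1$), and $(u,v) = ((u_1,v_1)+(u_2,v_2))/2$, then every point $(x,y)$ on the segment joining $(u_1,v_1)$ and $(u_2,v_2)$ satisfies $xy \le (9/8)A$. -/
/-- If three points `(u,v)`, `(u₁,v₁)`, `(u₂,v₂)` in the open first quadrant all satisfy
`x*y ≤ A` (with `A ≥ 1`) and `(u,v)` is the midpoint of the other two, then every point on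
the segment joining `(u₁,v₁)` and `(u₂,v₂)` satisfies `x*y ≤ (9/8)*A`. -/
theorem segment_product_bound (A u v u₁ v₁ u₂ v₂ : ℝ)
    (hA : 1 ≤ A)
    (hu : 0 < u) (hv : 0 < v) (hu₁ : 0 < u₁) (hv₁ : 0 < v₁) (hu₂ : 0 < u₂) (hv₂ : 0 < v₂)
    (h : u * v ≤ A) (h₁ : u₁ * v₁ ≤ A) (h₂ : u₂ * v₂ ≤ A)
    (hmu : u = (u₁ + u₂) / 2) (hmv : v = (v₁ + v₂) / 2) :
    ∀ θ ∈ Set.Icc (0:ℝ) 1,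
      (θ * u₁ + (1 - θ) * u₂) * (θ * v₁ + (1 - θ) * v₂) ≤ (9/8) * A := by
  intro θ hθ
  obtain ⟨h0, h1⟩ := hθ
  have hm : (u₁ + u₂) * (v₁ + v₂) ≤ 4 * A := by
    have := h; rw [hmu, hmv] at this; nlinarith
  have ht : 0 ≤ θ * (1 - θ) := mul_nonneg h0 (by linarith)
  rcases le_total θ (1/2) with hc | hc
  · nlinarith [sq_nonneg (θ - 1/4), mul_pos hu₁ hv₁, mul_pos hu₂ hv₂,
      mul_nonneg ht (mul_pos hu₁ hv₁).le, mul_nonneg ht (mul_pos hu₂ hv₂).le,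
      mul_nonneg (mul_nonneg h0 h0) (sub_nonneg.mpr h₂),
      mul_nonneg ht (sub_nonneg.mpr hm), mul_nonneg h0 (sub_nonneg.mpr h₁),
      mul_nonneg (sub_nonneg.mpr h1) (sub_nonneg.mpr h₂),
      mul_nonneg (mul_nonneg h0 (mul_pos hu₁ hv₁).le) (by linarith : (0:ℝ) ≤ 1 - 2*θ)]
  · nlinarith [sq_nonneg (θ - 3/4), mul_pos hu₁ hv₁, mul_pos hu₂ hv₂,
      mul_nonneg ht (mul_pos hu₁ hv₁).le, mul_nonneg ht (mul_pos hu₂ hv₂).le,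
      mul_nonneg ht (sub_nonneg.mpr hm), mul_nonneg h0 (sub_nonneg.mpr h₁),
      mul_nonneg (sub_nonneg.mpr h1) (sub_nonneg.mpr h₂),
      mul_nonneg (mul_nonneg (sub_nonneg.mpr h1) (mul_pos hu₂ hv₂).le) (by linarith : (0:ℝ) ≤ 2*θ - 1)]
end

section
/- If the endpoints and midpoint of a segment in $\mathbb{R}^2$ lie in the set $\{(x,y) : x \ge 0, y \ge 0, xy \le 1\}$, then every point $(x,y)$ of the segment satisfies $xy \le 9/8$, and the constant $9/8$ is attained (i.e., is sharp). -/
lemma seg_aux (s t a θ : ℝ) (hs0 : 0 ≤ s) (hs1 : s ≤ 1) (ht0 : 0 ≤ t)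
    (ht1 : t ≤ 1) (ha : -a ≤ 4 - 2*s - 2*t) (hθ0 : 0 ≤ θ) (hθ1 : θ ≤ 1) :
    (1-θ)*s + θ*t - a*θ*(1-θ) ≤ 9/8 := by
  have h1 : 0 ≤ θ*(1-θ) := by nlinarith
  have h2 : -a*(θ*(1-θ)) ≤ (4-2*s-2*t)*(θ*(1-θ)) := by
    apply mul_le_mul_of_nonneg_right ha h1
  nlinarith [mul_nonneg hs0 ht0,
    mul_nonneg (mul_nonneg hs0 (sub_nonneg.2 ht1)) (sq_nonneg (4*θ-1)),
    mul_nonneg (mul_nonneg (sub_nonneg.2 hs1) ht0) (sq_nonneg (4*θ-3)),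
    mul_nonneg (mul_nonneg (sub_nonneg.2 hs1) (sub_nonneg.2 ht1)) (sq_nonneg (2*θ-1)),
    mul_nonneg (sub_nonneg.2 hs1) (sub_nonneg.2 ht1)]

/-- If the endpoints and midpoint of a segment in `ℝ²` lie in
`{(x,y) : x ≥ 0, y ≥ 0, x*y ≤ 1}`, then every point `(x,y)` of the segment satisfies
`x*y ≤ 9/8`; moreover the constant `9/8` is sharp (attained). -/
theorem segment_product_bound_sharp :
    (∀ u₁ v₁ u₂ v₂ : ℝ,
      0 ≤ u₁ → 0 ≤ v₁ → 0 ≤ u₂ → 0 ≤ v₂ →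
      u₁ * v₁ ≤ 1 → u₂ * v₂ ≤ 1 →
      ((u₁ + u₂) / 2) * ((v₁ + v₂) / 2) ≤ 1 →
      ∀ θ ∈ Set.Icc (0:ℝ) 1,
        (θ * u₁ + (1 - θ) * u₂) * (θ * v₁ + (1 - θ) * v₂) ≤ 9/8) ∧
    (∃ u₁ v₁ u₂ v₂ : ℝ, ∃ θ ∈ Set.Icc (0:ℝ) 1,
      0 ≤ u₁ ∧ 0 ≤ v₁ ∧ 0 ≤ u₂ ∧ 0 ≤ v₂ ∧
      u₁ * v₁ ≤ 1 ∧ u₂ * v₂ ≤ 1 ∧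
      ((u₁ + u₂) / 2) * ((v₁ + v₂) / 2) ≤ 1 ∧
      (θ * u₁ + (1 - θ) * u₂) * (θ * v₁ + (1 - θ) * v₂) = 9/8) := by
  constructor
  · intro u₁ v₁ u₂ v₂ hu₁ hv₁ hu₂ hv₂ h1 h2 hm θ hθ
    obtain ⟨hθ0, hθ1⟩ := hθ
    set a : ℝ := (u₁ - u₂) * (v₁ - v₂) with ha_def
    have ha : -a ≤ 4 - 2*(u₂*v₂) - 2*(u₁*v₁) := by nlinarith [hm]
    have key := seg_aux (u₂*v₂) (u₁*v₁) a θ (mul_nonneg hu₂ hv₂) h2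
      (mul_nonneg hu₁ hv₁) h1 ha hθ0 hθ1
    have hid : (θ * u₁ + (1 - θ) * u₂) * (θ * v₁ + (1 - θ) * v₂)
        = (1-θ)*(u₂*v₂) + θ*(u₁*v₁) - a*θ*(1-θ) := by rw [ha_def]; ring
    linarith
  · exact ⟨0, 3, 1, 1, 1/4, ⟨by norm_num, by norm_num⟩, by norm_num, by norm_num,
      by norm_num, by norm_num, by norm_num, by norm_num, by norm_num, by norm_num⟩
end

section
/- Let $\mathcal{X}$ be a real normed space and $a, b \in \mathcal{X}$ with $\|a\| = \|b\| = 1$. Then there exists a continuous linear functional $x^* \in \mathcal{X}^*$ with $\|x^*\| \le 1$ such that $|x^*(a)| \ge 1/2$ and $|x^*(b)| \ge 1/2$. -/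
lemma double_hb_key_aux (α β : ℝ) (hα : 0 ≤ α) :
    ∃ t s : ℝ, |t| + |s| ≤ 1 ∧ 1/2 ≤ |t + s * α| ∧ 1/2 ≤ |t * β + s| := by
  rcases le_or_gt 0 β with hβ | hβ
  · -- both nonnegative: t = s = 1/2
    refine ⟨1/2, 1/2, by rw [abs_of_nonneg] <;> norm_num, ?_, ?_⟩
    · have : (1:ℝ)/2 ≤ 1/2 + 1/2 * α := by linarith
      exact this.trans (le_abs_self _)
    · have : (1:ℝ)/2 ≤ 1/2 * β + 1/2 := by linarith
      exact this.trans (le_abs_self _)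
  · rcases le_or_gt (1/2) (-β) with hB | hB
    · -- |β| ≥ 1/2 : take g alone
      refine ⟨1, 0, by norm_num, by norm_num, ?_⟩
      refine le_abs.mpr (Or.inr ?_)
      linarith
    rcases le_or_gt (1/2) α with hA | hA
    · -- α ≥ 1/2 : take h alone
      refine ⟨0, 1, by norm_num, ?_, by norm_num⟩
      have : (1:ℝ)/2 ≤ 0 + 1 * α := by linarith
      exact this.trans (le_abs_self _)
    -- mixed case: 0 ≤ α < 1/2, 0 < B := -β < 1/2
    set B : ℝ := -β with hBdef
    have hB0 : 0 < B := by simp [hBdef]; linarith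
    rcases le_or_gt (B * (1 - 2*α)) α with hcond | hcond
    · -- t = (1/2 - α)/(1-α), s = 1 - t
      set t : ℝ := (1/2 - α)/(1-α) with htdef
      have h1α : (0:ℝ) < 1 - α := by linarith
      have ht : t * (1 - α) = 1/2 - α := by
        rw [htdef]; field_simp
      have ht0 : 0 ≤ t := div_nonneg (by linarith) (by linarith)
      have ht1 : t ≤ 1 := by nlinarith
      refine ⟨t, 1 - t, ?_, ?_, ?_⟩
      · rw [abs_of_nonneg ht0, abs_of_nonneg (by linarith)]; linarith
      · have : t + (1 - t) * α = 1/2 := by nlinarith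
        rw [this, abs_of_nonneg] <;> norm_num
      · have hval : 1/2 ≤ t * β + (1 - t) := by nlinarith
        exact hval.trans (le_abs_self _)
    · -- t = (1/2 + α)/(1+α), s = -(1 - t)
      have hcond' : α * (1 - 2*B) ≤ B := by nlinarith
      set t : ℝ := (1/2 + α)/(1+α) with htdef
      have h1α : (0:ℝ) < 1 + α := by linarith
      have ht : t * (1 + α) = 1/2 + α := by
        rw [htdef]; field_simp
      have ht0 : 0 ≤ t := div_nonneg (by linarith) (by linarith)
      have ht1 : t ≤ 1 := by nlinarith
      refine ⟨t, -(1 - t), ?_, ?_, ?_⟩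
      · rw [abs_of_nonneg ht0, abs_neg, abs_of_nonneg (by linarith)]; linarith
      · have : t + -(1 - t) * α = 1/2 := by nlinarith
        rw [this, abs_of_nonneg] <;> norm_num
      · refine le_abs.mpr (Or.inr ?_)
        have : t * B + (1 - t) ≥ 1/2 := by nlinarith
        have hβB : β = -B := by rw [hBdef]; ring
        rw [hβB]; linarith

lemma double_hb_key (α β : ℝ) :
    ∃ t s : ℝ, |t| + |s| ≤ 1 ∧ 1/2 ≤ |t + s * α| ∧ 1/2 ≤ |t * β + s| := by
  rcases le_or_gt 0 α with h | h
  · exact double_hb_key_aux α β h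
  · obtain ⟨t, s, h1, h2, h3⟩ := double_hb_key_aux (-α) (-β) (by linarith)
    refine ⟨t, -s, by simpa using h1, ?_, ?_⟩
    · have : t + -s * α = t + s * (-α) := by ring
      rw [this]; exact h2
    · have : t * β + -s = -(t * (-β) + s) := by ring
      rw [this, abs_neg]; exact h3

set_option maxHeartbeats 800000 in
set_option synthInstance.maxHeartbeats 200000 in
/-- "Double Hahn–Banach": for any two unit vectors `a, b` in a real normed space there is a
continuous linear functional of norm at most `1` whose absolute value is at least `1/2`
on both `a` and `b`. -/
theorem double_hahn_banach {X : Type*} [NormedAddCommGroup X] [NormedSpace ℝ X]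
    (a b : X) (ha : ‖a‖ = 1) (hb : ‖b‖ = 1) :
    ∃ f : X →L[ℝ] ℝ, ‖f‖ ≤ 1 ∧ 1/2 ≤ |f a| ∧ 1/2 ≤ |f b| := by
  have ha0 : a ≠ 0 := by intro h; rw [h, norm_zero] at ha; norm_num at ha
  have hb0 : b ≠ 0 := by intro h; rw [h, norm_zero] at hb; norm_num at hb
  obtain ⟨g, hg1, hga⟩ := exists_dual_vector ℝ a (norm_ne_zero_iff.mpr ha0)
  obtain ⟨h, hh1, hhb⟩ := exists_dual_vector ℝ b (norm_ne_zero_iff.mpr hb0)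
  have hga' : g a = 1 := by rw [hga]; simp [ha]
  have hhb' : h b = 1 := by rw [hhb]; simp [hb]
  obtain ⟨t, s, hts, hfa, hfb⟩ := double_hb_key (h a) (g b)
  refine ⟨t • g + s • h, ?_, ?_, ?_⟩
  · calc ‖t • g + s • h‖ ≤ ‖t • g‖ + ‖s • h‖ := norm_add_le _ _
      _ = |t| * ‖g‖ + |s| * ‖h‖ := by
          rw [norm_smul t g, norm_smul s h, Real.norm_eq_abs, Real.norm_eq_abs]
      _ ≤ 1 := by rw [hg1, hh1]; simpa using hts
  · have heq : (t • g + s • h) a = t + s * h a := by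
      simp only [ContinuousLinearMap.add_apply, ContinuousLinearMap.coe_smul',
        Pi.smul_apply, smul_eq_mul, hga', mul_one]
    rw [heq]; exact hfa
  · have heq : (t • g + s • h) b = t * g b + s := by
      simp only [ContinuousLinearMap.add_apply, ContinuousLinearMap.coe_smul',
        Pi.smul_apply, smul_eq_mul, hhb', mul_one]
    rw [heq]; exact hfb
end

section
/- Let $a, b \in \mathbb{R}^N$ be nonzero vectors. Then there exist real numbers $\alpha_1, \dots, \alpha_N$ with $\sum_{k=1}^N \alpha_k = 0$, $|\alpha_k| \le 1/3$ for all $k$, and such that $|\sum_k \alpha_k a_k| \ge \frac{1}{12}\sum_k |a_k - \bar a|$ and $|\sum_k \alpha_k b_k| \ge \frac{1}{12}\sum_k |b_k - \bar b|$, where $\bar a = N^{-1}\sum_k a_k$ and $\bar b = N^{-1}\sum_k b_k$. -/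
open Finset

/-- Core case: `s ≤ 0 ≤ t`, both small. -/
lemma core_combo (u v s t : ℝ) (hu1 : 1/2 ≤ u) (hv1 : 1/2 ≤ v)
    (hs0 : s ≤ 0) (hs : -(1/4) ≤ s) (ht0 : 0 ≤ t) (ht : t ≤ 1/4) :
    ∃ l m : ℝ, 0 ≤ l ∧ l + |m| ≤ 1 ∧ 1/4 ≤ |l*u + m*s| ∧ 1/4 ≤ |l*t + m*v| := by
  set σ : ℝ := -s with hσdef
  have hσ0 : 0 ≤ σ := by simp [hσdef]; linarith
  have hσ4 : σ ≤ 1/4 := by simp [hσdef]; linarith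
  have hsσ : s = -σ := by rw [hσdef]; ring
  by_cases hC : (1/4 - σ) * (v + t) ≤ (v - 1/4) * (u - σ)
  · -- use l = (1/4-σ)/(u-σ), m = -(1-l)
    have hden : 0 < u - σ := by linarith
    set l : ℝ := (1/4 - σ)/(u - σ) with hldef
    have hl0 : 0 ≤ l := div_nonneg (by linarith) (le_of_lt hden)
    have hl1 : l ≤ 1 := by rw [hldef, div_le_one hden]; linarith
    have hkey : l * (u - σ) = 1/4 - σ := by
      rw [hldef]; field_simp
    refine ⟨l, -(1-l), hl0, ?_, ?_, ?_⟩
    · rw [abs_of_nonpos (by linarith)]; linarith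
    · have hx : l*u + (-(1-l))*s = 1/4 := by rw [hsσ]; nlinarith [hkey]
      rw [hx, abs_of_nonneg (by norm_num : (0:ℝ) ≤ 1/4)]
    · have hle : l * (v + t) ≤ v - 1/4 := by
        rw [hldef, div_mul_eq_mul_div, div_le_iff₀ hden]; exact hC
      have hy : l*t + (-(1-l))*v ≤ -(1/4) := by
        have hr : l*t + (-(1-l))*v = l*(v+t) - v := by ring
        linarith
      have := neg_le_abs (l*t + (-(1-l))*v)
      linarith
  · -- derive the + condition
    push_neg at hC
    have hC' : (1/4 + σ) * (v - t) ≤ (v - 1/4) * (u + σ) := by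
      nlinarith [mul_nonneg hσ0 ht0, mul_nonneg (by linarith : (0:ℝ) ≤ 2*u - 1) (by linarith : (0:ℝ) ≤ 4*v - 1)]
    have hden : 0 < u + σ := by linarith
    set l : ℝ := (1/4 + σ)/(u + σ) with hldef
    have hl0 : 0 ≤ l := div_nonneg (by linarith) (le_of_lt hden)
    have hl1 : l ≤ 1 := by rw [hldef, div_le_one hden]; linarith
    have hkey : l * (u + σ) = 1/4 + σ := by
      rw [hldef]; field_simp
    refine ⟨l, (1-l), hl0, ?_, ?_, ?_⟩
    · rw [abs_of_nonneg (by linarith)]; linarith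
    · have hx : l*u + (1-l)*s = 1/4 := by rw [hsσ]; nlinarith [hkey]
      rw [hx, abs_of_nonneg (by norm_num : (0:ℝ) ≤ 1/4)]
    · have hle : l * (v - t) ≤ v - 1/4 := by
        rw [hldef, div_mul_eq_mul_div, div_le_iff₀ hden]; exact hC'
      have hy : 1/4 ≤ l*t + (1-l)*v := by
        have hr : l*t + (1-l)*v = v - l*(v-t) := by ring
        linarith
      have := le_abs_self (l*t + (1-l)*v)
      linarith

lemma combo (u v s t : ℝ) (hu1 : 1/2 ≤ u) (hv1 : 1/2 ≤ v)
    (hs : |s| ≤ 1) (ht : |t| ≤ 1) :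
    ∃ l m : ℝ, 0 ≤ l ∧ l + |m| ≤ 1 ∧ 1/4 ≤ |l*u + m*s| ∧ 1/4 ≤ |l*t + m*v| := by
  by_cases h1 : 1/4 ≤ |t|
  · refine ⟨1, 0, by norm_num, by norm_num, ?_, ?_⟩
    · have : (1:ℝ)*u + 0*s = u := by ring
      rw [this, abs_of_nonneg (by linarith : (0:ℝ) ≤ u)]; linarith
    · have : (1:ℝ)*t + 0*v = t := by ring
      rw [this]; linarith
  by_cases h2 : 1/4 ≤ |s|
  · refine ⟨0, 1, le_refl _, by norm_num, ?_, ?_⟩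
    · have : (0:ℝ)*u + 1*s = s := by ring
      rw [this]; linarith
    · have : (0:ℝ)*t + 1*v = v := by ring
      rw [this, abs_of_nonneg (by linarith : (0:ℝ) ≤ v)]; linarith
  push_neg at h1 h2
  have hs4 := abs_lt.mp h2
  have ht4 := abs_lt.mp h1
  rcases le_or_gt s 0 with hsn | hsp
  · rcases le_or_gt 0 t with htp | htn
    · exact core_combo u v s t hu1 hv1 hsn (by linarith [hs4.1]) htp (by linarith [ht4.2])
    · -- s ≤ 0, t < 0
      refine ⟨1/2, -(1/2), by norm_num, by rw [abs_neg, abs_of_nonneg] <;> norm_num, ?_, ?_⟩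
      · rw [abs_of_nonneg (by nlinarith)]; nlinarith
      · rw [abs_of_nonpos (by nlinarith)]; nlinarith
  · rcases le_or_gt 0 t with htp | htn
    · -- both ≥ 0
      refine ⟨1/2, 1/2, by norm_num, by rw [abs_of_nonneg] <;> norm_num, ?_, ?_⟩
      · rw [abs_of_nonneg (by nlinarith)]; nlinarith
      · rw [abs_of_nonneg (by nlinarith)]; nlinarith
    · -- s > 0, t < 0 : apply core to (-s, -t), flip m
      obtain ⟨l, m, hl, hlm, hx, hy⟩ := core_combo u v (-s) (-t) hu1 hv1 (by linarith)
        (by linarith [hs4.2]) (by linarith) (by linarith [ht4.1])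
      refine ⟨l, -m, hl, by simpa using hlm, ?_, ?_⟩
      · have : l*u + (-m)*s = l*u + m*(-s) := by ring
        rw [this]; exact hx
      · have : |l*t + (-m)*v| = |l*(-t) + m*v| := by
          rw [show l*t + (-m)*v = -(l*(-t) + m*v) by ring, abs_neg]
        rw [this]; exact hy

open Finset

/-- For mean-zero `c`, a mean-zero `f` with `|f| ≤ 1` capturing half the `ℓ¹` norm of `c`. -/
lemma exists_dual_functional {N : ℕ} (c : Fin N → ℝ) (hc : ∑ k, c k = 0) :
    ∃ f : Fin N → ℝ, (∑ k, f k) = 0 ∧ (∀ k, |f k| ≤ 1) ∧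
      (1/2) * ∑ k, |c k| ≤ ∑ k, f k * c k := by
  classical
  by_cases hzero : ∀ k, c k = 0
  · exact ⟨0, by simp, by simp, by simp [hzero]⟩
  push_neg at hzero
  obtain ⟨k0, hk0⟩ := hzero
  set P := Finset.univ.filter (fun k : Fin N => 0 < c k) with hPdef
  set M := Finset.univ.filter (fun k : Fin N => c k < 0) with hMdef
  have hPne : P.Nonempty := by
    by_contra h
    rw [Finset.not_nonempty_iff_eq_empty] at h
    have hall : ∀ k, c k ≤ 0 := by
      intro k
      by_contra hk
      push_neg at hk
      have : k ∈ P := by rw [hPdef]; simp [hk]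
      simp [h] at this
    have := (Finset.sum_eq_zero_iff_of_nonpos (fun i _ => hall i)).mp hc
    exact hk0 (this k0 (Finset.mem_univ k0))
  have hMne : M.Nonempty := by
    by_contra h
    rw [Finset.not_nonempty_iff_eq_empty] at h
    have hall : ∀ k, 0 ≤ c k := by
      intro k
      by_contra hk
      push_neg at hk
      have : k ∈ M := by rw [hMdef]; simp [hk]
      simp [h] at this
    have := (Finset.sum_eq_zero_iff_of_nonneg (fun i _ => hall i)).mp hc
    exact hk0 (this k0 (Finset.mem_univ k0))
  set p : ℝ := (P.card : ℝ) with hpdef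
  set m : ℝ := (M.card : ℝ) with hmdef
  have hp : 0 < p := by
    rw [hpdef]; exact_mod_cast Finset.card_pos.mpr hPne
  have hm : 0 < m := by
    rw [hmdef]; exact_mod_cast Finset.card_pos.mpr hMne
  set r : ℝ := min p m with hrdef
  have hr0 : 0 ≤ r := le_min hp.le hm.le
  have hrp : r ≤ p := min_le_left _ _
  have hrm : r ≤ m := min_le_right _ _
  refine ⟨fun k => if 0 < c k then r/p else if c k < 0 then -(r/m) else 0, ?_, ?_, ?_⟩
  · -- sum zero
    have hsplit : ∀ k : Fin N,
        (if 0 < c k then r/p else if c k < 0 then -(r/m) else 0)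
          = (if 0 < c k then r/p else 0) + (if c k < 0 then -(r/m) else 0) := by
      intro k
      rcases lt_trichotomy (c k) 0 with h | h | h
      · simp [h, not_lt.mpr h.le, asymm h]
      · simp [h]
      · simp [h, asymm h, not_lt.mpr h.le]
    rw [Finset.sum_congr rfl (fun k _ => hsplit k), Finset.sum_add_distrib,
      ← Finset.sum_filter, ← Finset.sum_filter, ← hPdef, ← hMdef,
      Finset.sum_const, Finset.sum_const, nsmul_eq_mul, nsmul_eq_mul,
      ← hpdef, ← hmdef]
    field_simp
    ring
  · -- bounds
    intro k
    dsimp only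
    split_ifs with h1 h2
    · rw [abs_of_nonneg (div_nonneg hr0 hp.le)]
      exact (div_le_one hp).mpr hrp
    · rw [abs_neg, abs_of_nonneg (div_nonneg hr0 hm.le)]
      exact (div_le_one hm).mpr hrm
    · simp
  · -- the inner product bound
    have hsplit : ∀ k : Fin N,
        (if 0 < c k then r/p else if c k < 0 then -(r/m) else 0) * c k
          = (r/p) * (if 0 < c k then c k else 0) + (-(r/m)) * (if c k < 0 then c k else 0) := by
      intro k
      rcases lt_trichotomy (c k) 0 with h | h | h
      · simp [h, not_lt.mpr h.le, asymm h]
      · simp [h]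
      · simp [h, asymm h, not_lt.mpr h.le]
    have habs : ∀ k : Fin N,
        |c k| = (if 0 < c k then c k else 0) - (if c k < 0 then c k else 0) := by
      intro k
      rcases lt_trichotomy (c k) 0 with h | h | h
      · simp [h, asymm h, abs_of_neg h]
      · simp [h]
      · simp [h, asymm h, abs_of_pos h]
    have hcsplit : ∀ k : Fin N,
        c k = (if 0 < c k then c k else 0) + (if c k < 0 then c k else 0) := by
      intro k
      rcases lt_trichotomy (c k) 0 with h | h | h
      · simp [h, asymm h]
      · simp [h]
      · simp [h, asymm h]
    set SP : ℝ := ∑ k, (if 0 < c k then c k else 0) with hSP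
    set SM : ℝ := ∑ k, (if c k < 0 then c k else 0) with hSM
    have hPM : SP + SM = 0 := by
      rw [hSP, hSM, ← Finset.sum_add_distrib]
      rw [← Finset.sum_congr rfl (fun k _ => (hcsplit k).symm)] at *
      exact hc
    have hSPnn : 0 ≤ SP := Finset.sum_nonneg (fun k _ => by
      split_ifs with h
      · exact h.le
      · exact le_refl 0)
    have hlhs : ∑ k, |c k| = SP - SM := by
      rw [Finset.sum_congr rfl (fun k _ => habs k), Finset.sum_sub_distrib]
    have hrhs : ∑ k, (if 0 < c k then r/p else if c k < 0 then -(r/m) else 0) * c k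
        = (r/p) * SP + (-(r/m)) * SM := by
      rw [Finset.sum_congr rfl (fun k _ => hsplit k), Finset.sum_add_distrib,
        ← Finset.mul_sum, ← Finset.mul_sum]
    rw [hlhs, hrhs]
    have hge1 : 1 ≤ r/p + r/m := by
      rcases le_total p m with h | h
      · have : r = p := min_eq_left h
        rw [this, div_self hp.ne']
        have : 0 ≤ p/m := div_nonneg hp.le hm.le
        linarith
      · have : r = m := min_eq_right h
        rw [this, div_self hm.ne']
        have : 0 ≤ m/p := div_nonneg hm.le hp.le
        linarith
    have hSM' : SM = -SP := by linarith
    rw [hSM']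
    have : (r/p) * SP + (-(r/m)) * (-SP) = (r/p + r/m) * SP := by ring
    rw [this]
    nlinarith [mul_le_mul_of_nonneg_right hge1 hSPnn]

lemma abs_sum_mul_le {N : ℕ} (f x : Fin N → ℝ) (hf : ∀ k, |f k| ≤ 1) :
    |∑ k, f k * x k| ≤ ∑ k, |x k| := by
  refine (Finset.abs_sum_le_sum_abs _ _).trans (Finset.sum_le_sum fun k _ => ?_)
  rw [abs_mul]
  calc |f k| * |x k| ≤ 1 * |x k| := mul_le_mul_of_nonneg_right (hf k) (abs_nonneg _)
    _ = |x k| := one_mul _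

/-- For nonzero `a, b ∈ ℝᴺ` there is a mean-zero sequence `α` with `|α k| ≤ 1/3` capturing,
simultaneously for `a` and `b`, at least `1/12` of the `ℓ¹` oscillation around the mean. -/
theorem mean_zero_functional_two_vectors (N : ℕ) (a b : Fin N → ℝ)
    (ha : a ≠ 0) (hb : b ≠ 0) :
    ∃ α : Fin N → ℝ,
      (∑ k, α k) = 0 ∧
      (∀ k, |α k| ≤ 1/3) ∧
      (1/12) * ∑ k, |a k - (∑ j, a j) / N| ≤ |∑ k, α k * a k| ∧
      (1/12) * ∑ k, |b k - (∑ j, b j) / N| ≤ |∑ k, α k * b k| := by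
  classical
  have hN : (N : ℝ) ≠ 0 := by
    have : N ≠ 0 := by rintro rfl; exact ha (funext fun k => k.elim0)
    exact_mod_cast this
  set a' : Fin N → ℝ := fun k => a k - (∑ j, a j) / N with ha'
  set b' : Fin N → ℝ := fun k => b k - (∑ j, b j) / N with hb'
  have hsa : (∑ k, a' k) = 0 := by
    rw [ha', Finset.sum_sub_distrib, Finset.sum_const, Finset.card_univ, Fintype.card_fin,
      nsmul_eq_mul]
    field_simp; ring
  have hsb : (∑ k, b' k) = 0 := by
    rw [hb', Finset.sum_sub_distrib, Finset.sum_const, Finset.card_univ, Fintype.card_fin,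
      nsmul_eq_mul]
    field_simp; ring
  have htrans_a : ∀ α : Fin N → ℝ, (∑ k, α k) = 0 →
      (∑ k, α k * a k) = ∑ k, α k * a' k := by
    intro α h0
    have hpt : ∀ k, α k * a' k = α k * a k - α k * ((∑ j, a j) / N) := by
      intro k; rw [ha']; ring
    rw [Finset.sum_congr rfl fun k _ => hpt k, Finset.sum_sub_distrib,
      ← Finset.sum_mul, h0]
    ring
  have htrans_b : ∀ α : Fin N → ℝ, (∑ k, α k) = 0 →
      (∑ k, α k * b k) = ∑ k, α k * b' k := by
    intro α h0
    have hpt : ∀ k, α k * b' k = α k * b k - α k * ((∑ j, b j) / N) := by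
      intro k; rw [hb']; ring
    rw [Finset.sum_congr rfl fun k _ => hpt k, Finset.sum_sub_distrib,
      ← Finset.sum_mul, h0]
    ring
  obtain ⟨f, hf0, hf1, hfa⟩ := exists_dual_functional a' hsa
  obtain ⟨g, hg0, hg1, hgb⟩ := exists_dual_functional b' hsb
  set Sa : ℝ := ∑ k, |a' k| with hSa
  set Sb : ℝ := ∑ k, |b' k| with hSb
  have hSa_goal : (∑ k, |a k - (∑ j, a j) / N|) = Sa := rfl
  have hSb_goal : (∑ k, |b k - (∑ j, b j) / N|) = Sb := rfl
  have hSa_nn : 0 ≤ Sa := Finset.sum_nonneg fun k _ => abs_nonneg _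
  have hSb_nn : 0 ≤ Sb := Finset.sum_nonneg fun k _ => abs_nonneg _
  by_cases hSb0 : Sb = 0
  · -- use f/3
    refine ⟨fun k => f k / 3, ?_, ?_, ?_, ?_⟩
    · rw [← Finset.sum_div, hf0]; norm_num
    · intro k
      rw [abs_div, abs_of_nonneg (by norm_num : (0:ℝ) ≤ 3)]
      have := hf1 k; linarith
    · have h1 : ∑ k, (f k / 3) * a k = (∑ k, f k * a' k) / 3 := by
        calc ∑ k, (f k / 3) * a k = (∑ k, f k * a k)/3 := by
              rw [Finset.sum_div]; exact Finset.sum_congr rfl fun k _ => by ring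
          _ = (∑ k, f k * a' k)/3 := by rw [htrans_a f hf0]
      beta_reduce
      rw [h1]
      have hX : (1/2) * Sa ≤ ∑ k, f k * a' k := hfa
      have : (0:ℝ) ≤ (∑ k, f k * a' k)/3 := by linarith
      rw [abs_of_nonneg this]
      linarith
    · rw [hSb0]
      simpa using abs_nonneg _
  by_cases hSa0 : Sa = 0
  · -- use g/3
    refine ⟨fun k => g k / 3, ?_, ?_, ?_, ?_⟩
    · rw [← Finset.sum_div, hg0]; norm_num
    · intro k
      rw [abs_div, abs_of_nonneg (by norm_num : (0:ℝ) ≤ 3)]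
      have := hg1 k; linarith
    · rw [hSa0]
      simpa using abs_nonneg _
    · have h1 : ∑ k, (g k / 3) * b k = (∑ k, g k * b' k) / 3 := by
        calc ∑ k, (g k / 3) * b k = (∑ k, g k * b k)/3 := by
              rw [Finset.sum_div]; exact Finset.sum_congr rfl fun k _ => by ring
          _ = (∑ k, g k * b' k)/3 := by rw [htrans_b g hg0]
      beta_reduce
      rw [h1]
      have hX : (1/2) * Sb ≤ ∑ k, g k * b' k := hgb
      have : (0:ℝ) ≤ (∑ k, g k * b' k)/3 := by linarith
      rw [abs_of_nonneg this]
      linarith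
  -- main case
  have hSap : 0 < Sa := lt_of_le_of_ne hSa_nn (Ne.symm hSa0)
  have hSbp : 0 < Sb := lt_of_le_of_ne hSb_nn (Ne.symm hSb0)
  set u : ℝ := (∑ k, f k * a' k)/Sa with hu
  set v : ℝ := (∑ k, g k * b' k)/Sb with hv
  set s : ℝ := (∑ k, g k * a' k)/Sa with hs
  set t : ℝ := (∑ k, f k * b' k)/Sb with ht
  have hu1 : 1/2 ≤ u := by
    rw [hu, le_div_iff₀ hSap]; linarith [hfa]
  have hv1 : 1/2 ≤ v := by
    rw [hv, le_div_iff₀ hSbp]; linarith [hgb]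
  have hs_abs : |s| ≤ 1 := by
    rw [hs, abs_div, abs_of_pos hSap, div_le_one hSap]
    exact abs_sum_mul_le g a' hg1
  have ht_abs : |t| ≤ 1 := by
    rw [ht, abs_div, abs_of_pos hSbp, div_le_one hSbp]
    exact abs_sum_mul_le f b' hf1
  obtain ⟨l, m, hl0, hlm, hx, hy⟩ := combo u v s t hu1 hv1 hs_abs ht_abs
  have hfa' : (∑ k, f k * a' k) = u * Sa := by rw [hu]; field_simp
  have hga' : (∑ k, g k * a' k) = s * Sa := by rw [hs]; field_simp
  have hfb' : (∑ k, f k * b' k) = t * Sb := by rw [ht]; field_simp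
  have hgb' : (∑ k, g k * b' k) = v * Sb := by rw [hv]; field_simp
  refine ⟨fun k => (l * f k + m * g k)/3, ?_, ?_, ?_, ?_⟩
  · rw [← Finset.sum_div, Finset.sum_add_distrib, ← Finset.mul_sum, ← Finset.mul_sum,
      hf0, hg0]
    norm_num
  · intro k
    rw [abs_div, abs_of_nonneg (by norm_num : (0:ℝ) ≤ 3)]
    have h1 : |l * f k + m * g k| ≤ 1 := by
      calc |l * f k + m * g k| ≤ |l * f k| + |m * g k| := abs_add_le _ _
        _ = l * |f k| + |m| * |g k| := by rw [abs_mul, abs_mul, abs_of_nonneg hl0]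
        _ ≤ l * 1 + |m| * 1 := by
            gcongr
            · exact hf1 k
            · exact hg1 k
        _ ≤ 1 := by linarith
    linarith
  · have hsum0 : (∑ k, (l * f k + m * g k)/3) = 0 := by
      rw [← Finset.sum_div, Finset.sum_add_distrib, ← Finset.mul_sum, ← Finset.mul_sum,
        hf0, hg0]
      norm_num
    have hxa : ∑ k, ((l * f k + m * g k)/3) * a k = Sa * (l*u + m*s) / 3 := by
      calc ∑ k, ((l * f k + m * g k)/3) * a k
          = ∑ k, (l * (f k * a k) + m * (g k * a k))/3 :=
            Finset.sum_congr rfl fun k _ => by ring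
        _ = (∑ k, (l * (f k * a k) + m * (g k * a k)))/3 := by rw [Finset.sum_div]
        _ = (l * (∑ k, f k * a k) + m * (∑ k, g k * a k))/3 := by
            rw [Finset.sum_add_distrib, Finset.mul_sum, Finset.mul_sum]
        _ = (l * (∑ k, f k * a' k) + m * (∑ k, g k * a' k))/3 := by
            rw [htrans_a f hf0, htrans_a g hg0]
        _ = Sa * (l*u + m*s)/3 := by rw [hfa', hga']; ring
    beta_reduce
    rw [hxa, abs_div, abs_of_nonneg (by norm_num : (0:ℝ) ≤ 3), abs_mul,
      abs_of_pos hSap]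
    have h1 : Sa * (1/4) ≤ Sa * |l*u + m*s| := by
      exact mul_le_mul_of_nonneg_left hx hSap.le
    linarith
  · have hxb : ∑ k, ((l * f k + m * g k)/3) * b k = Sb * (l*t + m*v) / 3 := by
      calc ∑ k, ((l * f k + m * g k)/3) * b k
          = ∑ k, (l * (f k * b k) + m * (g k * b k))/3 :=
            Finset.sum_congr rfl fun k _ => by ring
        _ = (∑ k, (l * (f k * b k) + m * (g k * b k)))/3 := by rw [Finset.sum_div]
        _ = (l * (∑ k, f k * b k) + m * (∑ k, g k * b k))/3 := by
            rw [Finset.sum_add_distrib, Finset.mul_sum, Finset.mul_sum]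
        _ = (l * (∑ k, f k * b' k) + m * (∑ k, g k * b' k))/3 := by
            rw [htrans_b f hf0, htrans_b g hg0]
        _ = Sb * (l*t + m*v)/3 := by rw [hfb', hgb']; ring
    beta_reduce
    rw [hxb, abs_div, abs_of_nonneg (by norm_num : (0:ℝ) ≤ 3), abs_mul,
      abs_of_pos hSbp]
    have h1 : Sb * (1/4) ≤ Sb * |l*t + m*v| := by
      exact mul_le_mul_of_nonneg_left hy hSbp.le
    linarith
end

section
/- Let $Q$ be a real quadratic form on $\mathbb{R}^n$ in variables $(\dots, x, y, \dots)$ (with two distinguished coordinates $x, y$) such that $Q[v] \ge 2|x y|$ for all $v \in \mathbb{R}^n$. Then there exists $\alpha > 0$ such that $Q[v] \ge \alpha x^2 + \alpha^{-1} y^2$ for all $v \in \mathbb{R}^n$. -/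
open scoped RealInnerProductSpace

lemma two_dim_sep (A b C : ℝ) (h : ∀ x y : ℝ, 2 * |x * y| ≤ A * x^2 + b * (x*y) + C * y^2) :
    ∃ α : ℝ, 0 < α ∧ ∀ x y : ℝ, α * x^2 + α⁻¹ * y^2 ≤ A * x^2 + b * (x*y) + C * y^2 := by
  have hA0 : 0 ≤ A := by have := h 1 0; simp at this; linarith
  have hC0 : 0 ≤ C := by have := h 0 1; simp at this; linarith
  have hApos : 0 < A := by
    rcases lt_or_eq_of_le hA0 with h' | h'
    · exact h'
    exfalso
    have h1 := h (C+1) 1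
    have h2 := h (C+1) (-1)
    have habs : |(C+1) * 1| = C + 1 := by rw [abs_of_nonneg] <;> nlinarith
    have habs2 : |(C+1) * (-1)| = C + 1 := by rw [abs_of_nonpos] <;> nlinarith
    rw [habs] at h1; rw [habs2] at h2
    nlinarith
  have hCpos : 0 < C := by
    rcases lt_or_eq_of_le hC0 with h' | h'
    · exact h'
    exfalso
    have h1 := h 1 (A+1)
    have h2 := h (-1) (A+1)
    have habs : |1 * (A+1)| = A + 1 := by rw [abs_of_nonneg] <;> nlinarith
    have habs2 : |(-1) * (A+1)| = A + 1 := by rw [abs_of_nonpos] <;> nlinarith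
    rw [habs] at h1; rw [habs2] at h2
    nlinarith
  set a := Real.sqrt A with ha_def
  set c := Real.sqrt C with hc_def
  have ha2 : a^2 = A := Real.sq_sqrt hA0
  have hc2 : c^2 = C := Real.sq_sqrt hC0
  have ha : 0 < a := Real.sqrt_pos.2 hApos
  have hc : 0 < c := Real.sqrt_pos.2 hCpos
  -- key bounds
  have hca : |c * a| = c * a := abs_of_pos (mul_pos hc ha)
  have hp : 2 + b ≤ 2 * (a * c) := by
    have h1 := h c (-a)
    have : |c * (-a)| = c * a := by rw [abs_of_neg] <;> nlinarith
    rw [this] at h1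
    nlinarith [mul_pos ha hc]
  have hm : 2 - b ≤ 2 * (a * c) := by
    have h1 := h c a
    rw [hca] at h1
    nlinarith [mul_pos ha hc]
  refine ⟨a / c, div_pos ha hc, fun x y => ?_⟩
  have hinv : (a / c)⁻¹ = c / a := by rw [inv_div]
  rw [hinv, div_mul_eq_mul_div, div_mul_eq_mul_div,
    div_add_div _ _ (ne_of_gt hc) (ne_of_gt ha), div_le_iff₀ (by positivity), ← ha2, ← hc2]
  nlinarith [mul_nonneg (sub_nonneg.2 hp) (sq_nonneg (a*x - c*y)),
    mul_nonneg (sub_nonneg.2 hm) (sq_nonneg (a*x + c*y)), mul_pos ha hc,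
    sq_nonneg (a*x - c*y), sq_nonneg (a*x + c*y)]

lemma symm_op_solvable {n : ℕ} (T : EuclideanSpace ℝ (Fin n) →ₗ[ℝ] EuclideanSpace ℝ (Fin n))
    (hsym : ∀ x y, ⟪T x, y⟫ = ⟪x, T y⟫)
    (φ : EuclideanSpace ℝ (Fin n)) (hφ : ∀ x, T x = 0 → ⟪x, φ⟫ = 0) :
    ∃ w, T w = φ := by
  have hle : LinearMap.range T ≤ (LinearMap.ker T)ᗮ := by
    rintro _ ⟨x, rfl⟩
    intro z hz
    rw [LinearMap.mem_ker] at hz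
    rw [real_inner_comm, hsym, hz, inner_zero_right]
  have hfr : LinearMap.range T = (LinearMap.ker T)ᗮ := by
    apply Submodule.eq_of_le_of_finrank_eq hle
    have h1 := LinearMap.finrank_range_add_finrank_ker T
    have h2 := Submodule.finrank_add_finrank_orthogonal (K := LinearMap.ker T)
    omega
  have : φ ∈ (LinearMap.ker T)ᗮ := by
    intro z hz
    rw [LinearMap.mem_ker] at hz
    exact hφ z hz
  rw [← hfr] at this
  exact this

lemma exists_adapted (n : ℕ) (Q : QuadraticForm ℝ (Fin n → ℝ)) (i j : Fin n) (hij : i ≠ j)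
    (hQ0 : ∀ v, 0 ≤ Q v) :
    ∃ u : Fin n → ℝ, u i = 1 ∧ u j = 0 ∧
      ∀ w : Fin n → ℝ, w i = 0 → w j = 0 → QuadraticMap.polar Q u w = 0 := by
  classical
  -- radical property
  have hrad : ∀ w, Q w = 0 → ∀ v, QuadraticMap.polar Q v w = 0 := by
    intro w hw v
    by_contra hp
    set p := QuadraticMap.polar Q v w with hpdef
    have key : ∀ t : ℝ, 0 ≤ Q v + t * p := by
      intro t
      have h1 := hQ0 (v + t • w)
      have h2 : Q (v + t • w) = Q v + Q (t • w) + QuadraticMap.polar Q v (t • w) := by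
        rw [QuadraticMap.polar]; ring
      rw [QuadraticMap.map_smul, QuadraticMap.polar_smul_right, hw] at h2
      simp only [smul_eq_mul, mul_zero] at h2
      rw [h2] at h1
      linarith
    have := key (-(Q v + 1)/p)
    rw [div_mul_cancel₀ _ hp] at this
    linarith
  -- the subspace W
  let W : Submodule ℝ (EuclideanSpace ℝ (Fin n)) :=
  { carrier := {w : (EuclideanSpace ℝ (Fin n)) | w i = 0 ∧ w j = 0}
    add_mem' := fun {a b} ha hb =>
      ⟨by rw [show (a+b) i = a i + b i from rfl, ha.1, hb.1, add_zero],
       by rw [show (a+b) j = a j + b j from rfl, ha.2, hb.2, add_zero]⟩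
    zero_mem' := ⟨rfl, rfl⟩
    smul_mem' := fun c {a} ha =>
      ⟨by rw [show (c • a) i = c • a i from rfl, ha.1, smul_zero],
       by rw [show (c • a) j = c • a j from rfl, ha.2, smul_zero]⟩ }
  have hWmem : ∀ w : (EuclideanSpace ℝ (Fin n)), w ∈ W ↔ (w i = 0 ∧ w j = 0) := fun w => Iff.rfl
  -- the operator M
  let M : (EuclideanSpace ℝ (Fin n)) →ₗ[ℝ] (EuclideanSpace ℝ (Fin n)) :=
  { toFun := fun v => WithLp.toLp 2 (fun k => QuadraticMap.polar Q v (Pi.single k 1) : Fin n → ℝ)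
    map_add' := fun v w => congrArg (WithLp.toLp 2) (funext fun k => QuadraticMap.polar_add_left Q v w (Pi.single k 1))
    map_smul' := fun c v => congrArg (WithLp.toLp 2) (funext fun k => QuadraticMap.polar_smul_left (Q := Q) c v (Pi.single k 1))}
  have hMapp : ∀ (v : (EuclideanSpace ℝ (Fin n))) (k : Fin n), M v k = QuadraticMap.polar Q v (Pi.single k 1) :=
    fun _ _ => rfl
  have hsingle : ∀ (k : Fin n) (t : ℝ), (Pi.single k t : Fin n → ℝ) = t • (Pi.single k (1:ℝ) : Fin n → ℝ) := by
    intro k t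
    funext l
    by_cases h : l = k <;> simp [Pi.single_apply, h]
  have expand : ∀ (v u : Fin n → ℝ),
      QuadraticMap.polar Q v u = ∑ k, u k * QuadraticMap.polar Q v (Pi.single k 1) := by
    intro v u
    calc QuadraticMap.polar Q v u = (Q.polarBilin v) (∑ k, Pi.single k (u k)) := by
          rw [Finset.univ_sum_single]
          rfl
      _ = ∑ k, (Q.polarBilin v) (Pi.single k (u k)) := map_sum _ _ _
      _ = ∑ k, u k * QuadraticMap.polar Q v (Pi.single k 1) := by
          refine Finset.sum_congr rfl fun k _ => ?_
          rw [hsingle k (u k), map_smul]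
          rfl
  have hMinner : ∀ v w : (EuclideanSpace ℝ (Fin n)), ⟪M v, w⟫ = QuadraticMap.polar Q v w := by
    intro v w
    calc ⟪M v, w⟫ = ∑ k, QuadraticMap.polar Q v (Pi.single k 1) * w k := by
          simp [PiLp.inner_apply, RCLike.inner_apply, conj_trivial, hMapp]
          exact Finset.sum_congr rfl fun k _ => mul_comm _ _
      _ = QuadraticMap.polar Q v w := by
          rw [expand v w]
          exact Finset.sum_congr rfl fun k _ => mul_comm _ _
  -- the projection
  let P : (EuclideanSpace ℝ (Fin n)) →ₗ[ℝ] (EuclideanSpace ℝ (Fin n)) := W.subtype ∘ₗ (W.orthogonalProjectionOnto : (EuclideanSpace ℝ (Fin n)) →ₗ[ℝ] W)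
  have hPmem : ∀ x : (EuclideanSpace ℝ (Fin n)), P x ∈ W := fun x => (W.orthogonalProjectionOnto x).2
  have hPid : ∀ x : (EuclideanSpace ℝ (Fin n)), x ∈ W → P x = x := by
    intro x hx
    exact Submodule.starProjection_eq_self_iff.mpr hx
  have hPsym : ∀ x y : (EuclideanSpace ℝ (Fin n)), ⟪P x, y⟫ = ⟪x, P y⟫ := fun x y =>
    Submodule.inner_starProjection_left_eq_right W x y
  -- the operator T
  let T : (EuclideanSpace ℝ (Fin n)) →ₗ[ℝ] (EuclideanSpace ℝ (Fin n)) := P ∘ₗ M ∘ₗ P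
  have hTapp : ∀ x : (EuclideanSpace ℝ (Fin n)), T x = P (M (P x)) := fun _ => rfl
  have hTsym : ∀ x y : (EuclideanSpace ℝ (Fin n)), ⟪T x, y⟫ = ⟪x, T y⟫ := by
    intro x y
    rw [hTapp, hTapp, hPsym, hMinner, real_inner_comm, hPsym, hMinner,
      QuadraticMap.polar_comm]
  -- the right-hand side
  let e : (EuclideanSpace ℝ (Fin n)) := WithLp.toLp 2 (Pi.single i 1 : Fin n → ℝ)
  have hφ : ∀ x : (EuclideanSpace ℝ (Fin n)), T x = 0 → ⟪x, -(P (M e))⟫ = 0 := by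
    intro x hx
    have h1 : QuadraticMap.polar Q (P x) (P x) = 0 := by
      have h0 : ⟪T x, x⟫ = (0:ℝ) := by rw [hx, inner_zero_left]
      rw [hTapp, hPsym, hMinner] at h0
      exact h0
    have hQPx : Q (P x) = 0 := by
      have h2 := QuadraticMap.polar_self Q (P x)
      rw [h1] at h2
      have h3 : (2:ℕ) • Q (P x) = 2 * Q (P x) := by simp [nsmul_eq_mul]
      rw [h3] at h2
      linarith
    have h3 := hrad (P x) hQPx e
    rw [inner_neg_right, ← hPsym, real_inner_comm, hMinner, h3, neg_zero]
  obtain ⟨w', hw'⟩ := symm_op_solvable T hTsym _ hφ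
  refine ⟨e + P w', ?_, ?_, ?_⟩
  · have hW := (hWmem _).mp (hPmem w')
    show (Pi.single i (1:ℝ) : Fin n → ℝ) i + P w' i = 1
    rw [hW.1, Pi.single_eq_same, add_zero]
  · have hW := (hWmem _).mp (hPmem w')
    show (Pi.single i (1:ℝ) : Fin n → ℝ) j + P w' j = 0
    rw [hW.2, Pi.single_eq_of_ne (Ne.symm hij), add_zero]
  · intro w hwi hwj
    have hwW : (WithLp.toLp 2 w : (EuclideanSpace ℝ (Fin n))) ∈ W := ⟨hwi, hwj⟩
    have hPMu : P (M (e + P w')) = 0 := by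
      rw [map_add, map_add]
      have h4 : P (M (P w')) = T w' := rfl
      rw [h4, hw']
      simp
    have h5 : QuadraticMap.polar Q (e + P w') w = ⟪M (e + P w'), (WithLp.toLp 2 w : (EuclideanSpace ℝ (Fin n)))⟫ :=
      (hMinner _ _).symm
    rw [h5, ← hPid (WithLp.toLp 2 w) hwW, ← hPsym, hPMu, inner_zero_left]


/-- If a real quadratic form `Q` on `ℝⁿ` with two distinguished coordinates `x = v i`,
`y = v j` satisfies `Q[v] ≥ 2|v i * v j|` for all `v`, then there is `α > 0` with
`Q[v] ≥ α (v i)² + α⁻¹ (v j)²` for all `v`. -/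
theorem quadratic_form_separation (n : ℕ) (Q : QuadraticForm ℝ (Fin n → ℝ))
    (i j : Fin n) (hij : i ≠ j)
    (hQ : ∀ v : Fin n → ℝ, 2 * |v i * v j| ≤ Q v) :
    ∃ α : ℝ, 0 < α ∧ ∀ v : Fin n → ℝ, α * (v i)^2 + α⁻¹ * (v j)^2 ≤ Q v := by
  have hQ0 : ∀ v, 0 ≤ Q v := fun v => le_trans (by positivity) (hQ v)
  obtain ⟨u, hui, huj, huo⟩ := exists_adapted n Q i j hij hQ0
  obtain ⟨z, hzj, hzi, hzo⟩ := exists_adapted n Q j i (Ne.symm hij) hQ0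
  set A := Q u with hA
  set C := Q z with hC
  set b := QuadraticMap.polar Q u z with hb
  have hexp : ∀ x y : ℝ, Q (x • u + y • z) = A*x^2 + b*(x*y) + C*y^2 := by
    intro x y
    have h1 : Q (x • u + y • z)
        = Q (x • u) + Q (y • z) + QuadraticMap.polar Q (x • u) (y • z) := by
      rw [QuadraticMap.polar]; ring
    rw [QuadraticMap.polar_smul_left (Q := Q), QuadraticMap.polar_smul_right (Q := Q),
      QuadraticMap.map_smul, QuadraticMap.map_smul] at h1
    rw [h1]
    simp only [smul_eq_mul, ← hb]
    ring
  have hq2d : ∀ x y : ℝ, 2*|x*y| ≤ A*x^2 + b*(x*y) + C*y^2 := by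
    intro x y
    have h1 := hQ (x • u + y • z)
    have hxi : (x • u + y • z) i = x := by
      simp [Pi.add_apply, Pi.smul_apply, hui, hzi]
    have hxj : (x • u + y • z) j = y := by
      simp [Pi.add_apply, Pi.smul_apply, huj, hzj]
    rw [hxi, hxj, hexp x y] at h1
    exact h1
  obtain ⟨α, hα, hineq⟩ := two_dim_sep A b C hq2d
  refine ⟨α, hα, fun v => ?_⟩
  set x := v i with hx
  set y := v j with hy
  set w := v - (x • u + y • z) with hw
  have hwi : w i = 0 := by
    simp [hw, Pi.sub_apply, Pi.add_apply, Pi.smul_apply, hui, hzi, hx]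
  have hwj : w j = 0 := by
    simp [hw, Pi.sub_apply, Pi.add_apply, Pi.smul_apply, huj, hzj, hy]
  have hvdec : v = (x • u + y • z) + w := by rw [hw]; abel
  have hdec : Q v = Q (x • u + y • z) + Q w
      + QuadraticMap.polar Q (x • u + y • z) w := by
    conv_lhs => rw [hvdec]
    rw [QuadraticMap.polar]; ring
  have hporth : QuadraticMap.polar Q (x • u + y • z) w = 0 := by
    rw [QuadraticMap.polar_add_left (Q := Q), QuadraticMap.polar_smul_left (Q := Q),
      QuadraticMap.polar_smul_left (Q := Q), huo w hwi hwj, hzo w hwj hwi]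
    simp
  have := hineq x y
  rw [hexp x y] at hdec
  have hQw := hQ0 w
  linarith [this, hdec, hporth, hQw]
end

section
/- Let $\Phi$ be a polynomial of degree at most 2 on $\mathbb{R}^n$ with distinguished coordinates $x, y$, such that for every $X, X_1, X_2 \in \mathbb{R}^n$ with $X = (X_1 + X_2)/2$ one has $\Phi(X) - (\Phi(X_1) + \Phi(X_2))/2 \ge |x(X_1) - x(X_2)| \cdot |y(X_1) - y(X_2)|$. Then for any weights $\theta_k \ge 0$ with $\sum_k \theta_k = 1$ and any points $X_k$ with $X = \sum_k \theta_k X_k$, it holds that $\Phi(X) - \sum_k \theta_k \Phi(X_k) \ge 4 (\sum_k \theta_k |x(X) - x(X_k)|^2)^{1/2} (\sum_k \theta_k |y(X) - y(X_k)|^2)^{1/2}$. -/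
open Finset
open Matrix


-- shape of low-degree exponent finsupps
lemma monomial_shape {n : ℕ} (s : Fin n →₀ ℕ) (h : (s.sum fun _ e => e) ≤ 2) :
    s = 0 ∨ (∃ i, s = Finsupp.single i 1) ∨
      (∃ i j, s = Finsupp.single i 1 + Finsupp.single j 1) := by
  have hcard : Multiset.card s.toMultiset ≤ 2 := by
    rw [Finsupp.card_toMultiset]; exact h
  interval_cases hc : (Multiset.card s.toMultiset)
  · left
    have : s.toMultiset = 0 := Multiset.card_eq_zero.mp hc
    have := congrArg Multiset.toFinsupp this
    simpa using this
  · right; left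
    obtain ⟨a, ha⟩ := Multiset.card_eq_one.mp hc
    refine ⟨a, ?_⟩
    have := congrArg Multiset.toFinsupp ha
    simpa using this
  · right; right
    obtain ⟨a, b, hab⟩ := Multiset.card_eq_two.mp hc
    refine ⟨a, b, ?_⟩
    have := congrArg Multiset.toFinsupp hab
    rw [show ({a, b} : Multiset (Fin n)) = {a} + {b} from rfl,
      Multiset.toFinsupp_add, Multiset.toFinsupp_singleton,
      Multiset.toFinsupp_singleton] at this
    simpa using this

noncomputable section

/-- symmetric rank-style bilinear piece `x y ↦ a*(x i * y j + x j * y i)/2`. -/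
def bilinPiece {n : ℕ} (i j : Fin n) (a : ℝ) :
    (Fin n → ℝ) →ₗ[ℝ] (Fin n → ℝ) →ₗ[ℝ] ℝ :=
  LinearMap.mk₂ ℝ (fun x y => a * (x i * y j + x j * y i) / 2)
    (by intros; simp; ring) (by intros; simp; ring)
    (by intros; simp; ring) (by intros; simp; ring)

lemma exists_repr {n : ℕ} (P : MvPolynomial (Fin n) ℝ) (hP : P.totalDegree ≤ 2) :
    ∃ (B : (Fin n → ℝ) →ₗ[ℝ] (Fin n → ℝ) →ₗ[ℝ] ℝ) (L : (Fin n → ℝ) →ₗ[ℝ] ℝ) (c : ℝ),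
      (∀ x y, B x y = B y x) ∧
      ∀ v, MvPolynomial.eval v P = B v v + L v + c := by
  have H : ∀ s ∈ P.support, ∃ (B : (Fin n → ℝ) →ₗ[ℝ] (Fin n → ℝ) →ₗ[ℝ] ℝ)
      (L : (Fin n → ℝ) →ₗ[ℝ] ℝ) (c : ℝ), (∀ x y, B x y = B y x) ∧
      ∀ v, MvPolynomial.eval v (MvPolynomial.monomial s (P.coeff s)) = B v v + L v + c := by
    intro s hs
    have hdeg : (s.sum fun _ e => e) ≤ 2 := le_trans (MvPolynomial.le_totalDegree hs) hP
    rcases monomial_shape s hdeg with h0 | ⟨i, hi⟩ | ⟨i, j, hij⟩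
    · refine ⟨0, 0, P.coeff s, by simp, fun v => ?_⟩
      simp [h0, MvPolynomial.eval_monomial]
    · refine ⟨0, P.coeff s • LinearMap.proj i, 0, by simp, fun v => ?_⟩
      simp [hi, MvPolynomial.eval_monomial]
    · refine ⟨bilinPiece i j (P.coeff s), 0, 0, fun x y => by simp [bilinPiece]; left; ring,
        fun v => ?_⟩
      have : (MvPolynomial.monomial s (P.coeff s))
          = MvPolynomial.C (P.coeff s) * MvPolynomial.X i * MvPolynomial.X j := by
        rw [hij, MvPolynomial.X, MvPolynomial.X, MvPolynomial.C_apply,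
          MvPolynomial.monomial_mul, MvPolynomial.monomial_mul]
        simp
      rw [this]
      simp [bilinPiece]
      ring
  choose! Bf Lf cf hsym heval using H
  refine ⟨∑ s ∈ P.support, Bf s, ∑ s ∈ P.support, Lf s, ∑ s ∈ P.support, cf s,
    fun x y => ?_, fun v => ?_⟩
  · simp only [LinearMap.sum_apply]
    exact Finset.sum_congr rfl fun s hs => hsym s hs x y
  · conv_lhs => rw [← MvPolynomial.support_sum_monomial_coeff P]
    rw [map_sum]
    simp only [LinearMap.sum_apply, ← Finset.sum_add_distrib]
    exact Finset.sum_congr rfl fun s hs => heval s hs v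

end



lemma twoD (A C Bc : ℝ)
    (H : ∀ u v : ℝ, 4 * |u| * |v| ≤ A*u^2 + 2*Bc*(u*v) + C*v^2) :
    ∃ lam : ℝ, 0 < lam ∧ ∀ u v : ℝ,
      2*lam*u^2 + 2/lam*v^2 ≤ A*u^2 + 2*Bc*(u*v) + C*v^2 := by
  have hApos : 0 < A := by
    have hC0 : 0 ≤ C := by have := H 0 1; simpa using this
    set t : ℝ := 1/(C+1) with ht
    have htpos : 0 < t := by positivity
    have h1 := H 1 t
    have h2 := H 1 (-t)
    rw [abs_one, abs_of_pos htpos] at h1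
    rw [abs_one, abs_neg, abs_of_pos htpos] at h2
    have htC : t * (C+1) = 1 := by rw [ht]; field_simp
    nlinarith [mul_pos htpos htpos]
  have hCpos : 0 < C := by
    set t : ℝ := 1/(A+1) with ht
    have htpos : 0 < t := by positivity
    have h1 := H t 1
    have h2 := H (-t) 1
    rw [abs_one, abs_of_pos htpos] at h1
    rw [abs_neg, abs_of_pos htpos, abs_one] at h2
    have htA : t * (A+1) = 1 := by rw [ht]; field_simp
    nlinarith [mul_pos htpos htpos]
  set sa := Real.sqrt A with hsa'
  set sc := Real.sqrt C with hsc'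
  have hsa : sa^2 = A := Real.sq_sqrt hApos.le
  have hsc : sc^2 = C := Real.sq_sqrt hCpos.le
  have ha : 0 < sa := Real.sqrt_pos.mpr hApos
  have hc : 0 < sc := Real.sqrt_pos.mpr hCpos
  have hp : 0 < sa * sc := mul_pos ha hc
  have key : 2 + |Bc| ≤ sa * sc := by
    rcases le_or_gt 0 Bc with hb | hb
    · have h := H sc (-sa)
      rw [abs_of_pos hc, abs_neg, abs_of_pos ha] at h
      rw [abs_of_nonneg hb]
      nlinarith [hp]
    · have h := H sc sa
      rw [abs_of_pos hc, abs_of_pos ha] at h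
      rw [abs_of_neg hb]
      nlinarith [hp]
  refine ⟨sa/sc, by positivity, fun u v => ?_⟩
  have hr : 0 ≤ sa*sc - 2 - |Bc| := by linarith
  have e1 : 0 ≤ (sa*sc - 2 - |Bc|) * (sa*u)^2 := mul_nonneg hr (sq_nonneg _)
  have e2 : 0 ≤ (sa*sc - 2 - |Bc|) * (sc*v)^2 := mul_nonneg hr (sq_nonneg _)
  have e3 : 0 ≤ (|Bc| + Bc) * (sa*u + sc*v)^2 :=
    mul_nonneg (by linarith [neg_abs_le Bc]) (sq_nonneg _)
  have e4 : 0 ≤ (|Bc| - Bc) * (sa*u - sc*v)^2 :=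
    mul_nonneg (by linarith [le_abs_self Bc]) (sq_nonneg _)
  have cleared : 2*A*u^2 + 2*C*v^2 ≤ (A*u^2 + 2*Bc*(u*v) + C*v^2) * (sa*sc) := by
    rw [← hsa, ← hsc]
    nlinarith [e1, e2, e3, e4]
  have heq : 2*(sa/sc)*u^2 + 2/(sa/sc)*v^2 = (2*A*u^2 + 2*C*v^2) / (sa*sc) := by
    rw [← hsa, ← hsc]
    field_simp
  rw [heq, div_le_iff₀ hp]
  exact cleared


lemma factorization' {n : ℕ} (B : (Fin n → ℝ) →ₗ[ℝ] (Fin n → ℝ) →ₗ[ℝ] ℝ)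
    (hsymB : ∀ x y, B x y = B y x) (hpos : ∀ x, 0 ≤ B x x) :
    ∃ M : Matrix (Fin n) (Fin n) ℝ, ∀ v w, B v w = (M *ᵥ v) ⬝ᵥ (M *ᵥ w) := by
  set N := LinearMap.toMatrix₂' ℝ B with hNdef
  have hN : ∀ v w : Fin n → ℝ, B v w = v ⬝ᵥ N *ᵥ w := by
    intro v w
    rw [← Matrix.toLinearMap₂'_apply' (T := ℝ)]
    rw [hNdef, Matrix.toLinearMap₂'_toMatrix']
  have hPSD : N.PosSemidef := by
    refine Matrix.PosSemidef.of_dotProduct_mulVec_nonneg ?_ ?_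
    · ext k l
      simp only [Matrix.conjTranspose_apply, star_trivial]
      rw [hNdef]
      simp only [LinearMap.toMatrix₂'_apply]
      exact hsymB _ _
    · intro x
      have := hpos x
      rw [hN x x] at this
      simpa using this
  open scoped MatrixOrder in
  obtain ⟨S, hS⟩ := CStarAlgebra.nonneg_iff_eq_star_mul_self.mp hPSD.nonneg
  refine ⟨S, fun v w => ?_⟩
  calc B v w = v ⬝ᵥ N *ᵥ w := hN v w
    _ = v ⬝ᵥ (Sᵀ * S) *ᵥ w := by
        rw [hS, Matrix.star_eq_conjTranspose, Matrix.conjTranspose_eq_transpose_of_trivial]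
    _ = (S *ᵥ v) ⬝ᵥ (S *ᵥ w) := by
        rw [← Matrix.mulVec_mulVec, Matrix.dotProduct_mulVec, Matrix.vecMul_transpose]

lemma key_lambda {n : ℕ} (i j : Fin n)
    (B : (Fin n → ℝ) →ₗ[ℝ] (Fin n → ℝ) →ₗ[ℝ] ℝ) (hsymB : ∀ x y, B x y = B y x)
    (h4 : ∀ d : Fin n → ℝ, 4 * |d i| * |d j| ≤ B d d) :
    ∃ lam : ℝ, 0 < lam ∧ ∀ d : Fin n → ℝ,
      2*lam*(d i)^2 + 2/lam*(d j)^2 ≤ B d d := by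
  by_cases hij : i = j
  · subst hij
    refine ⟨1, one_pos, fun d => ?_⟩
    nlinarith [h4 d, sq_abs (d i)]
  · have hpos : ∀ x, 0 ≤ B x x := fun x => le_trans (by positivity) (h4 x)
    obtain ⟨M, hM⟩ := factorization' B hsymB hpos
    let fM : EuclideanSpace ℝ (Fin n) →ₗ[ℝ] EuclideanSpace ℝ (Fin n) := Matrix.toEuclideanLin M
    have hinner : ∀ p q : EuclideanSpace ℝ (Fin n), (inner ℝ p q : ℝ) = ∑ k, p k * q k := by
      intro p q
      simp [PiLp.inner_apply, RCLike.inner_apply, starRingEnd_apply]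
      exact Finset.sum_congr rfl fun _ _ => mul_comm _ _
    have hBfact : ∀ d : EuclideanSpace ℝ (Fin n), B d d = ‖fM d‖^2 := by
      intro d
      rw [← real_inner_self_eq_norm_sq, hinner]
      exact hM d d
    let V : Submodule ℝ (EuclideanSpace ℝ (Fin n)) :=
      { carrier := {d | d i = 0 ∧ d j = 0}
        add_mem' := fun {p q} hp hq => by
          simp only [Set.mem_setOf_eq, PiLp.add_apply] at *
          exact ⟨by rw [hp.1, hq.1, add_zero], by rw [hp.2, hq.2, add_zero]⟩
        zero_mem' := ⟨rfl, rfl⟩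
        smul_mem' := fun c p hp => by
          simp only [Set.mem_setOf_eq, PiLp.smul_apply, smul_eq_mul] at *
          exact ⟨by rw [hp.1, mul_zero], by rw [hp.2, mul_zero]⟩ }
    let W : Submodule ℝ (EuclideanSpace ℝ (Fin n)) := V.map fM
    obtain ⟨x, hx⟩ : ∃ t, t = fM (EuclideanSpace.single i 1) := ⟨_, rfl⟩
    obtain ⟨y, hy⟩ : ∃ t, t = fM (EuclideanSpace.single j 1) := ⟨_, rfl⟩
    obtain ⟨a, haW, haperp⟩ : ∃ a, x - a ∈ W ∧ a ∈ Wᗮ :=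
      ⟨x - W.starProjection x,
        by rw [sub_sub_cancel]; exact W.starProjection_apply_mem x,
        Submodule.sub_starProjection_mem_orthogonal x⟩
    obtain ⟨b, hbW, hbperp⟩ : ∃ b, y - b ∈ W ∧ b ∈ Wᗮ :=
      ⟨y - W.starProjection y,
        by rw [sub_sub_cancel]; exact W.starProjection_apply_mem y,
        Submodule.sub_starProjection_mem_orthogonal y⟩
    have key1 : ∀ (u v : ℝ) (w : EuclideanSpace ℝ (Fin n)), w ∈ W →
        ‖u • a + v • b‖^2 ≤ ‖u • x + v • y + w‖^2 := by
      intro u v w hw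
      have hdecomp : u • x + v • y + w
          = (u • a + v • b) + (u • (x - a) + v • (y - b) + w) := by
        rw [smul_sub, smul_sub]
        abel
      have hsperp : u • a + v • b ∈ Wᗮ :=
        Submodule.add_mem _ (Submodule.smul_mem _ _ haperp) (Submodule.smul_mem _ _ hbperp)
      have hwW : u • (x - a) + v • (y - b) + w ∈ W :=
        Submodule.add_mem _
          (Submodule.add_mem _ (Submodule.smul_mem _ _ haW) (Submodule.smul_mem _ _ hbW)) hw
      have hinner0 : (inner ℝ (u • a + v • b) (u • (x - a) + v • (y - b) + w) : ℝ) = 0 := by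
        rw [real_inner_comm]
        exact (Submodule.mem_orthogonal W (u • a + v • b)).mp hsperp _ hwW
      have expand : ‖(u • a + v • b) + (u • (x - a) + v • (y - b) + w)‖^2
          = ‖u • a + v • b‖^2 + ‖u • (x - a) + v • (y - b) + w‖^2 := by
        rw [norm_add_sq_real, hinner0]
        ring
      rw [hdecomp, expand]
      nlinarith [sq_nonneg ‖u • (x - a) + v • (y - b) + w‖]
    have factA : ∀ d : EuclideanSpace ℝ (Fin n),
        ‖d i • a + d j • b‖^2 ≤ B d d := by
      intro d
      rw [hBfact d]
      have hd' : d - d i • (EuclideanSpace.single i 1) - d j • (EuclideanSpace.single j 1) ∈ V := by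
        constructor
        · simp [PiLp.sub_apply, PiLp.smul_apply, EuclideanSpace.single_apply, hij]
        · simp [PiLp.sub_apply, PiLp.smul_apply, EuclideanSpace.single_apply, Ne.symm hij]
      have hfd : fM d = d i • x + d j • y
          + fM (d - d i • (EuclideanSpace.single i 1) - d j • (EuclideanSpace.single j 1)) := by
        simp only [map_sub, _root_.map_smul, hx, hy]
        abel
      rw [hfd]
      exact key1 _ _ _ (Submodule.mem_map_of_mem hd')
    have factB : ∀ u v : ℝ, 4 * |u| * |v| ≤ ‖u • a + v • b‖^2 := by
      intro u v
      obtain ⟨p, hpV, hp⟩ := Submodule.mem_map.mp haW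
      obtain ⟨q, hqV, hq⟩ := Submodule.mem_map.mp hbW
      obtain ⟨hp1, hp2⟩ : p i = 0 ∧ p j = 0 := hpV
      obtain ⟨hq1, hq2⟩ : q i = 0 ∧ q j = 0 := hqV
      set d : EuclideanSpace ℝ (Fin n) :=
        u • (EuclideanSpace.single i 1 - p) + v • (EuclideanSpace.single j 1 - q) with hd
      have hdi : d i = u := by
        rw [hd]
        simp [PiLp.add_apply, PiLp.smul_apply, PiLp.sub_apply, EuclideanSpace.single_apply,
          hij, Ne.symm hij, hp1, hq1]
      have hdj : d j = v := by
        rw [hd]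
        simp [PiLp.add_apply, PiLp.smul_apply, PiLp.sub_apply, EuclideanSpace.single_apply,
          hij, Ne.symm hij, hp2, hq2]
      have hfd : fM d = u • a + v • b := by
        rw [hd]
        simp only [map_add, _root_.map_smul, map_sub, hp, hq, ← hx, ← hy]
        rw [sub_sub_cancel, sub_sub_cancel]
      have h := h4 d
      rw [hdi, hdj] at h
      calc 4 * |u| * |v| ≤ B d d := h
        _ = ‖fM d‖^2 := hBfact d
        _ = ‖u • a + v • b‖^2 := by rw [hfd]
    have hexp : ∀ u v : ℝ, ‖u • a + v • b‖^2
        = ‖a‖^2*u^2 + 2*(inner ℝ a b : ℝ)*(u*v) + ‖b‖^2*v^2 := by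
      intro u v
      rw [norm_add_sq_real, real_inner_smul_left, real_inner_smul_right,
        norm_smul, norm_smul]
      simp [mul_pow, sq_abs]
      ring
    obtain ⟨lam, hlam, hfin⟩ := twoD (‖a‖^2) (‖b‖^2) (inner ℝ a b : ℝ)
      (fun u v => by rw [← hexp]; exact factB u v)
    refine ⟨lam, hlam, fun d => ?_⟩
    calc 2*lam*(d i)^2 + 2/lam*(d j)^2
        ≤ ‖a‖^2*(d i)^2 + 2*(inner ℝ a b : ℝ)*((d i)*(d j)) + ‖b‖^2*(d j)^2 := hfin _ _
      _ = ‖d i • a + d j • b‖^2 := (hexp _ _).symm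
      _ ≤ B d d := factA (WithLp.toLp 2 d)

/-- For a polynomial `Φ` of degree at most `2` on `ℝⁿ` whose midpoint concavity defect
dominates `|Δx|·|Δy|` for two distinguished coordinates, the two-point estimate upgrades to
arbitrary convex combinations with an `L²` modulus and constant `4`. -/
theorem quadratic_polynomial_convex_combination_estimate
    (n m : ℕ) (Φ : (Fin n → ℝ) → ℝ)
    (hpoly : ∃ P : MvPolynomial (Fin n) ℝ,
      P.totalDegree ≤ 2 ∧ ∀ v : Fin n → ℝ, Φ v = MvPolynomial.eval v P)
    (i j : Fin n)
    (hmid : ∀ X X₁ X₂ : Fin n → ℝ, X = (1/2 : ℝ) • (X₁ + X₂) →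
      |X₁ i - X₂ i| * |X₁ j - X₂ j| ≤ Φ X - (Φ X₁ + Φ X₂) / 2)
    (θ : Fin m → ℝ) (hθ : ∀ k, 0 ≤ θ k) (hθ1 : ∑ k, θ k = 1)
    (Xs : Fin m → Fin n → ℝ) (X : Fin n → ℝ) (hX : X = ∑ k, θ k • Xs k) :
    4 * Real.sqrt (∑ k, θ k * |X i - Xs k i|^2) * Real.sqrt (∑ k, θ k * |X j - Xs k j|^2)
      ≤ Φ X - ∑ k, θ k * Φ (Xs k) := by
  obtain ⟨P, hdeg, hval⟩ := hpoly
  obtain ⟨B, L, c, hsym, hrepr⟩ := exists_repr P hdeg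
  have hphi : ∀ v, Φ v = B v v + L v + c := fun v => (hval v).trans (hrepr v)
  -- midpoint hypothesis gives pointwise bound on the negated quadratic part
  have h4 : ∀ d : Fin n → ℝ, 4 * |d i| * |d j| ≤ (-B) d d := by
    intro d
    have h := hmid 0 d (-d) (by simp)
    have e1 : Φ 0 = c := by rw [hphi]; simp
    have e2 : Φ d = B d d + L d + c := hphi d
    have e3 : Φ (-d) = B d d - L d + c := by
      rw [hphi]
      simp only [map_neg, LinearMap.neg_apply, neg_neg]
      ring
    rw [e1, e2, e3] at h
    have hdi : d i - (-d) i = 2 * d i := by simp; ring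
    have hdj : d j - (-d) j = 2 * d j := by simp; ring
    rw [hdi, hdj, abs_mul, abs_mul] at h
    simp only [LinearMap.neg_apply]
    have h2 : |(2:ℝ)| = 2 := by norm_num
    rw [h2] at h
    nlinarith [h]
  have hsymneg : ∀ x y, (-B) x y = (-B) y x := by
    intro x y
    simp only [LinearMap.neg_apply]
    rw [hsym]
  obtain ⟨lam, hlam, hkey⟩ := key_lambda i j (-B) hsymneg h4
  -- the deviation vectors
  set e : Fin m → Fin n → ℝ := fun k => Xs k - X with he
  have hsum0 : ∑ k, θ k • e k = 0 := by
    simp only [he, smul_sub, Finset.sum_sub_distrib, ← Finset.sum_smul, hθ1, one_smul, ← hX,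
      sub_self]
  -- concavity defect identity
  have hBX1 : B X (∑ k, θ k • e k) = ∑ k, θ k * B X (e k) := by
    rw [map_sum]
    simp only [_root_.map_smul, smul_eq_mul]
  have hBX2 : B (∑ k, θ k • e k) X = ∑ k, θ k * B (e k) X := by
    rw [map_sum, LinearMap.sum_apply]
    simp only [_root_.map_smul, LinearMap.smul_apply, smul_eq_mul]
  have hL : L (∑ k, θ k • e k) = ∑ k, θ k * L (e k) := by
    rw [map_sum]
    simp only [_root_.map_smul, smul_eq_mul]
  rw [hsum0] at hBX1 hBX2 hL
  simp only [map_zero, LinearMap.zero_apply] at hBX1 hBX2 hL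
  have hident : Φ X - ∑ k, θ k * Φ (Xs k) = ∑ k, θ k * ((-B) (e k) (e k)) := by
    have hXs : ∀ k, Φ (Xs k) = (B X X + L X + c) + (B X (e k) + B (e k) X + L (e k))
        + B (e k) (e k) := by
      intro k
      have hXk : Xs k = X + e k := by simp [he]
      rw [hphi, hXk]
      simp only [map_add, LinearMap.add_apply]
      ring
    calc Φ X - ∑ k, θ k * Φ (Xs k)
        = (B X X + L X + c) - ∑ k, θ k * ((B X X + L X + c)
            + (B X (e k) + B (e k) X + L (e k)) + B (e k) (e k)) := by
          rw [hphi X]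
          congr 1
          exact Finset.sum_congr rfl fun k _ => by rw [hXs k]
      _ = (B X X + L X + c) - ((∑ k, θ k) * (B X X + L X + c)
            + ((∑ k, θ k * B X (e k)) + (∑ k, θ k * B (e k) X) + (∑ k, θ k * L (e k)))
            + ∑ k, θ k * B (e k) (e k)) := by
          rw [Finset.sum_mul]
          rw [← Finset.sum_add_distrib, ← Finset.sum_add_distrib, ← Finset.sum_add_distrib,
            ← Finset.sum_add_distrib]
          congr 1
          exact Finset.sum_congr rfl fun k _ => by ring
      _ = - ∑ k, θ k * B (e k) (e k) := by
          rw [hθ1, ← hBX1, ← hBX2, ← hL]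
          ring
      _ = ∑ k, θ k * ((-B) (e k) (e k)) := by
          rw [← Finset.sum_neg_distrib]
          exact Finset.sum_congr rfl fun k _ => by
            simp only [LinearMap.neg_apply]; ring
  rw [hident]
  -- the L² moduli
  set Si := ∑ k, θ k * |X i - Xs k i|^2 with hSi
  set Sj := ∑ k, θ k * |X j - Xs k j|^2 with hSj
  have hSi' : Si = ∑ k, θ k * (e k i)^2 := by
    exact Finset.sum_congr rfl fun k _ => by
      have : e k i = Xs k i - X i := by simp [he]
      rw [this, sq_abs]
      ring_nf
  have hSj' : Sj = ∑ k, θ k * (e k j)^2 := by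
    exact Finset.sum_congr rfl fun k _ => by
      have : e k j = Xs k j - X j := by simp [he]
      rw [this, sq_abs]
      ring_nf
  have hmain : 2*lam*Si + 2/lam*Sj ≤ ∑ k, θ k * ((-B) (e k) (e k)) := by
    rw [hSi', hSj', Finset.mul_sum, Finset.mul_sum, ← Finset.sum_add_distrib]
    refine Finset.sum_le_sum fun k _ => ?_
    have := hkey (e k)
    have hθk := hθ k
    calc 2*lam*(θ k * (e k i)^2) + 2/lam*(θ k * (e k j)^2)
        = θ k * (2*lam*(e k i)^2 + 2/lam*(e k j)^2) := by ring
      _ ≤ θ k * ((-B) (e k) (e k)) := mul_le_mul_of_nonneg_left this hθk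
  have hSinn : 0 ≤ Si := by
    rw [hSi']
    exact Finset.sum_nonneg fun k _ => mul_nonneg (hθ k) (sq_nonneg _)
  have hSjnn : 0 ≤ Sj := by
    rw [hSj']
    exact Finset.sum_nonneg fun k _ => mul_nonneg (hθ k) (sq_nonneg _)
  set si := Real.sqrt Si with hsi'
  set sj := Real.sqrt Sj with hsj'
  have hsi : si^2 = Si := Real.sq_sqrt hSinn
  have hsj : sj^2 = Sj := Real.sq_sqrt hSjnn
  have key2 : 4*si*sj*lam ≤ 2*lam*si^2*lam + 2*sj^2 := by
    nlinarith [sq_nonneg (lam*si - sj)]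
  rw [hsi, hsj] at key2
  have hdiv : 2/lam*Sj*lam = 2*Sj := by field_simp
  have final : 4 * si * sj ≤ 2*lam*Si + 2/lam*Sj := by
    rw [← mul_le_mul_iff_left₀ hlam, add_mul, hdiv]
    linarith [key2]
  linarith [hmain, final]
end

section
/- Let $I$ be an interval, $w$ a positive integrable weight on $I$, and let $E_I f := (\fint_I f)\mathbf{1}_I$ be the averaging operator. Then the operator norm of $E_I$ on $L^2(I, w\,dx)$ equals $(\fint_I w)^{1/2} (\fint_I w^{-1})^{1/2}$. -/
open MeasureTheory

/-- The operator norm of the averaging operator `E_I f = (⨍_I f) 𝟙_I` on `L²(I, w dx)` equals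
`(⨍_I w)^{1/2} (⨍_I w⁻¹)^{1/2}`.  Since `‖E_I f‖_{L²(w)} = |⨍_I f| (∫_I w)^{1/2}`, the operator
norm is the least upper bound of these quantities over `f` with `∫_I f² w = 1`. -/
theorem averaging_operator_norm (a b : ℝ) (hab : a < b) (w : ℝ → ℝ)
    (hw : ∀ x ∈ Set.Icc a b, 0 < w x)
    (hwi : IntegrableOn w (Set.Icc a b))
    (hwinv : IntegrableOn (fun x => (w x)⁻¹) (Set.Icc a b)) :
    IsLUB {r : ℝ | ∃ f : ℝ → ℝ, Measurable f ∧
        IntegrableOn f (Set.Icc a b) ∧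
        IntegrableOn (fun x => (f x)^2 * w x) (Set.Icc a b) ∧
        (∫ x in Set.Icc a b, (f x)^2 * w x) = 1 ∧
        r = |(b - a)⁻¹ * ∫ x in Set.Icc a b, f x| * Real.sqrt (∫ x in Set.Icc a b, w x)}
      (Real.sqrt (((b - a)⁻¹ * ∫ x in Set.Icc a b, w x) *
        ((b - a)⁻¹ * ∫ x in Set.Icc a b, (w x)⁻¹))) := by
  set I := Set.Icc a b with hI
  set W : ℝ := ∫ x in I, w x with hWdef
  set C : ℝ := ∫ x in I, (w x)⁻¹ with hCdef
  have hba : (0:ℝ) < (b - a)⁻¹ := inv_pos.mpr (by linarith)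
  have hIvol : (0 : ENNReal) < volume I := by
    rw [hI, Real.volume_Icc]
    exact ENNReal.ofReal_pos.mpr (by linarith)
  -- positivity of the two integrals
  have hW : 0 < W := by
    rw [hWdef]
    rw [setIntegral_pos_iff_support_of_nonneg_ae
      (by filter_upwards [ae_restrict_mem measurableSet_Icc] with x hx; exact (hw x hx).le) hwi]
    refine lt_of_lt_of_le hIvol (measure_mono ?_)
    intro x hx
    exact ⟨(hw x hx).ne', hx⟩
  have hC : 0 < C := by
    rw [hCdef]
    rw [setIntegral_pos_iff_support_of_nonneg_ae
      (by filter_upwards [ae_restrict_mem measurableSet_Icc] with x hx;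
          exact (inv_pos.mpr (hw x hx)).le) hwinv]
    refine lt_of_lt_of_le hIvol (measure_mono ?_)
    intro x hx
    exact ⟨(inv_pos.mpr (hw x hx)).ne', hx⟩
  -- simplify the target
  have htarget : Real.sqrt (((b - a)⁻¹ * W) * ((b - a)⁻¹ * C))
      = (b - a)⁻¹ * Real.sqrt W * Real.sqrt C := by
    have h : ((b - a)⁻¹ * W) * ((b - a)⁻¹ * C)
        = ((b - a)⁻¹ * Real.sqrt W * Real.sqrt C)^2 := by
      rw [mul_pow, mul_pow, Real.sq_sqrt hW.le, Real.sq_sqrt hC.le]; ring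
    rw [h, Real.sqrt_sq (by positivity)]
  constructor
  · -- upper bound
    rintro r ⟨f, hmeas, hfi, hf2i, hnorm, rfl⟩
    set B : ℝ := ∫ x in I, f x with hBdef
    have key : ∀ t : ℝ, 0 ≤ C * (t * t) + (2 * B) * t + 1 := by
      intro t
      have hint : 0 ≤ ∫ x in I, ((f x)^2 * w x + 2 * t * f x + t^2 * (w x)⁻¹) := by
        refine integral_nonneg_of_ae ?_
        filter_upwards [ae_restrict_mem measurableSet_Icc] with x hx
        simp only [Pi.zero_apply]
        have hwx := hw x hx
        have hexp : (f x * w x + t)^2 * (w x)⁻¹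
            = (f x)^2 * w x + 2 * t * f x + t^2 * (w x)⁻¹ := by
          field_simp
          ring
        have := mul_nonneg (sq_nonneg (f x * w x + t)) (inv_pos.mpr hwx).le
        linarith [hexp ▸ this]
      have heq : (∫ x in I, ((f x)^2 * w x + 2 * t * f x + t^2 * (w x)⁻¹))
          = 1 + 2 * t * B + t^2 * C := by
        have i1 : Integrable (fun x => (f x)^2 * w x + 2 * t * f x) (volume.restrict I) :=
          hf2i.add (hfi.const_mul (2*t))
        have i2 : Integrable (fun x => t^2 * (w x)⁻¹) (volume.restrict I) :=
          hwinv.const_mul (t^2)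
        rw [integral_add i1 i2, integral_add hf2i (hfi.const_mul (2*t)), integral_const_mul,
            integral_const_mul, hnorm]
      rw [heq] at hint
      nlinarith [hint]
    have hdisc := discrim_le_zero key
    have hB2 : B^2 ≤ C := by
      rw [discrim] at hdisc
      nlinarith [hdisc]
    have hBle : |B| ≤ Real.sqrt C := Real.abs_le_sqrt hB2
    rw [htarget]
    calc |(b - a)⁻¹ * B| * Real.sqrt W = (b - a)⁻¹ * |B| * Real.sqrt W := by
          rw [abs_mul, abs_of_pos hba]
      _ ≤ (b - a)⁻¹ * Real.sqrt C * Real.sqrt W := by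
          exact mul_le_mul_of_nonneg_right
            (mul_le_mul_of_nonneg_left hBle hba.le) (Real.sqrt_nonneg W)
      _ = (b - a)⁻¹ * Real.sqrt W * Real.sqrt C := by ring
  · -- least: the bound is attained, so it suffices to show membership
    intro u hu
    refine hu ?_
    obtain ⟨g, hgmeas, hgae⟩ : ∃ g : ℝ → ℝ, Measurable g ∧
        (fun x => (w x)⁻¹) =ᶠ[ae (volume.restrict I)] g :=
      ⟨hwinv.1.mk _, hwinv.1.stronglyMeasurable_mk.measurable, hwinv.1.ae_eq_mk⟩
    have hsC : Real.sqrt C ≠ 0 := (Real.sqrt_pos.mpr hC).ne'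
    refine ⟨fun x => g x * (Real.sqrt C)⁻¹, hgmeas.mul_const _, (hwinv.congr hgae).mul_const _,
      ?_, ?_, ?_⟩
    case _ =>
      -- integrability of f² w
      refine (hwinv.mul_const C⁻¹).congr ?_
      filter_upwards [hgae, ae_restrict_mem measurableSet_Icc] with x hx1 hx2
      have hwx := hw x hx2
      rw [← hx1, mul_pow, inv_pow, inv_pow, Real.sq_sqrt hC.le]
      field_simp
    case _ =>
      have h1 : (∫ x in I, (g x * (Real.sqrt C)⁻¹)^2 * w x) = ∫ x in I, (w x)⁻¹ * C⁻¹ := by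
        refine integral_congr_ae ?_
        filter_upwards [hgae, ae_restrict_mem measurableSet_Icc] with x hx1 hx2
        have hwx := hw x hx2
        rw [← hx1, mul_pow, inv_pow, inv_pow, Real.sq_sqrt hC.le]
        field_simp
      rw [h1, integral_mul_const, ← hCdef, mul_inv_cancel₀ hC.ne']
    case _ =>
      have h2 : (∫ x in I, g x * (Real.sqrt C)⁻¹) = Real.sqrt C := by
        rw [integral_mul_const, ← integral_congr_ae hgae, ← hCdef]
        rw [← div_eq_mul_inv, Real.div_sqrt]
      rw [h2, htarget, abs_of_nonneg (by positivity)]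
      ring
end

section
/- Let $D \subset \mathbb{R}^m$ be a set such that $D = C \cap \{X : u(X)v(X) \le A\}$ where $C$ is convex and $u, v$ are two fixed positive coordinate functionals. Suppose $X_1, X_2 \in D$, the segment $[X_1, X_2]$ lies in $C$, and every point $X_\theta = \theta X_1 + (1-\theta)X_2$ on the segment satisfies $u(X_\theta)v(X_\theta) \le A$. Then the entire segment lies in $D$. Consequently, if $X_1, X_2 \in D$ and $(X_1+X_2)/2 \in D$, then (by the $9/8$ segment bound for the hyperbolic constraint) the segment $[X_1,X_2]$ lies in $D' = C \cap \{X : u(X)v(X) \le \frac{9}{8}A\}$. -/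
lemma quad_bound (a b c d A θ : ℝ) (ha : 0 < a) (hb : 0 < b) (hc : 0 < c) (hd : 0 < d)
    (h1 : a * b ≤ A) (h0 : c * d ≤ A) (hm : (a + c) / 2 * ((b + d) / 2) ≤ A)
    (hθ0 : 0 ≤ θ) (hθ1 : θ ≤ 1) :
    (θ * a + (1 - θ) * c) * (θ * b + (1 - θ) * d) ≤ 9/8 * A := by
  have key : (θ * a + (1 - θ) * c) * (θ * b + (1 - θ) * d)
      = 2 * (θ - 1/2) * (θ - 1) * (c * d) + 4 * θ * (1 - θ) * ((a + c) / 2 * ((b + d) / 2))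
        + 2 * θ * (θ - 1/2) * (a * b) := by ring
  have hApos : 0 < A := lt_of_lt_of_le (mul_pos ha hb) h1
  rcases le_or_gt θ (1/2) with h | h
  · have hL0 : 0 ≤ 2 * (θ - 1/2) * (θ - 1) := by nlinarith
    have hL1 : 0 ≤ 4 * θ * (1 - θ) := by nlinarith
    have hL2 : 2 * θ * (θ - 1/2) ≤ 0 := by nlinarith
    have hab : 0 < a * b := mul_pos ha hb
    nlinarith [mul_nonneg hL0 (sub_nonneg.2 h0), mul_nonneg hL1 (sub_nonneg.2 hm),
      mul_nonpos_of_nonpos_of_nonneg hL2 hab.le, sq_nonneg (θ - 1/4)]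
  · have hL0 : 2 * (θ - 1/2) * (θ - 1) ≤ 0 := by nlinarith
    have hL1 : 0 ≤ 4 * θ * (1 - θ) := by nlinarith
    have hL2 : 0 ≤ 2 * θ * (θ - 1/2) := by nlinarith
    have hcd : 0 < c * d := mul_pos hc hd
    nlinarith [mul_nonneg hL2 (sub_nonneg.2 h1), mul_nonneg hL1 (sub_nonneg.2 hm),
      mul_nonpos_of_nonpos_of_nonneg hL0 hcd.le, sq_nonneg (θ - 3/4)]

/-- Domain enlargement for the `A₂` Bellman domain `D = C ∩ {X : u(X)·v(X) ≤ A}`, where `C`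
is convex and `u, v` are coordinate functionals positive on `C`.  (i) If a segment lies in `C`
and satisfies the hyperbolic constraint pointwise, it lies in `D`.  (ii) If the endpoints and
midpoint of a segment lie in `D`, then the whole segment lies in
`D' = C ∩ {X : u(X)·v(X) ≤ (9/8)A}`. -/
theorem bellman_domain_enlargement
    (m : ℕ) (C : Set (Fin m → ℝ)) (hC : Convex ℝ C)
    (iu iv : Fin m) (A : ℝ) (hA : 1 ≤ A)
    (hpos : ∀ X ∈ C, 0 < X iu ∧ 0 < X iv) :
    (∀ X₁ X₂ : Fin m → ℝ,
      X₁ ∈ C ∩ {X | X iu * X iv ≤ A} → X₂ ∈ C ∩ {X | X iu * X iv ≤ A} →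
      (∀ θ ∈ Set.Icc (0:ℝ) 1, θ • X₁ + (1 - θ) • X₂ ∈ C) →
      (∀ θ ∈ Set.Icc (0:ℝ) 1,
        (θ • X₁ + (1 - θ) • X₂) iu * (θ • X₁ + (1 - θ) • X₂) iv ≤ A) →
      (∀ θ ∈ Set.Icc (0:ℝ) 1, θ • X₁ + (1 - θ) • X₂ ∈ C ∩ {X | X iu * X iv ≤ A})) ∧
    (∀ X₁ X₂ : Fin m → ℝ,
      X₁ ∈ C ∩ {X | X iu * X iv ≤ A} → X₂ ∈ C ∩ {X | X iu * X iv ≤ A} →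
      (1/2 : ℝ) • (X₁ + X₂) ∈ C ∩ {X | X iu * X iv ≤ A} →
      (∀ θ ∈ Set.Icc (0:ℝ) 1,
        θ • X₁ + (1 - θ) • X₂ ∈ C ∩ {X | X iu * X iv ≤ (9/8) * A})) := by
  constructor
  · intro X₁ X₂ h1 h2 hseg hcon θ hθ
    exact ⟨hseg θ hθ, hcon θ hθ⟩
  · intro X₁ X₂ h1 h2 hmid θ hθ
    obtain ⟨hθ0, hθ1⟩ := hθ
    have hCmem : θ • X₁ + (1 - θ) • X₂ ∈ C :=
      hC h1.1 h2.1 hθ0 (by linarith) (by ring)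
    refine ⟨hCmem, ?_⟩
    obtain ⟨ha, hb⟩ := hpos X₁ h1.1
    obtain ⟨hc, hd⟩ := hpos X₂ h2.1
    have hmid' : (X₁ iu + X₂ iu) / 2 * ((X₁ iv + X₂ iv) / 2) ≤ A := by
      have := hmid.2
      simp only [Set.mem_setOf_eq, Pi.smul_apply, Pi.add_apply, smul_eq_mul] at this
      linarith [this]
    have := quad_bound (X₁ iu) (X₁ iv) (X₂ iu) (X₂ iv) A θ ha hb hc hd h1.2 h2.2 hmid' hθ0 hθ1
    simpa [Pi.add_apply, Pi.smul_apply, smul_eq_mul] using this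
end
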